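/- arXiv:1403.8080 — 4 statements merged into one kernel-verified Lean document; each statement's English description precedes it below -/
import Mathlib

section
/- Let s be a real number and n a natural number. Then the sum over k from 0 to ⌊n/2⌋ of (s^k/(2k)!!)·D^{2k}H_n(x,s) equals x^n as polynomials in x, where D denotes differentiation of polynomials with respect to x and D^{2k} its (2k)-th iterate. -/
/-!
Writing `D` for differentiation, `H_n(x,s) = e^{-sD²/2} xⁿ` and the sum is `e^{sD²/2}` applied to
it, so the claim is `e^{sD²/2} e^{-sD²/2} = 1`. The series may be cut off after the term in
`D^{2⌊n/2⌋}`, since `(D²)^{⌊n/2⌋+1}` kills `xⁿ`; and on a vector killed by `L^N`, the truncations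
at order `N` of power series in an operator `L` compose exactly as the series multiply.
-/

/-- The Hermite polynomials `H n (x, s)` of Cigler:
`H_n(x,s) = n! · Σ_{k=0}^{⌊n/2⌋} (-1)^k s^k x^{n-2k} / ((2k)!! (n-2k)!)` with `(2k)!! = 2^k k!`. -/
noncomputable def hermiteCigler (s : ℝ) (n : ℕ) : Polynomial ℝ :=
  ∑ k ∈ Finset.range (n / 2 + 1),
    Polynomial.C ((-1 : ℝ) ^ k * s ^ k * (Nat.factorial n : ℝ) /
        ((2 ^ k * (Nat.factorial k : ℝ)) * (Nat.factorial (n - 2 * k) : ℝ))) *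
      Polynomial.X ^ (n - 2 * k)

open Finset Polynomial
open PowerSeries (trunc rescale exp)

section TruncatedAction

variable {R M : Type*}

theorem aeval_trunc_apply [CommSemiring R] [AddCommMonoid M] [Module R M] (N : ℕ)
    (f : PowerSeries R) (L : Module.End R M) (x : M) :
    aeval L (trunc N f) x = ∑ k ∈ range N, PowerSeries.coeff k f • (L ^ k) x := by
  rw [aeval_def, PowerSeries.eval₂_trunc_eq_sum_range, LinearMap.sum_apply]
  simp only [Module.End.mul_apply, Module.algebraMap_end_apply]

variable [CommRing R] [AddCommGroup M] [Module R M] {N : ℕ} {L : Module.End R M} {x : M}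

theorem aeval_trunc_coe_apply_of_pow_apply_eq_zero (hx : (L ^ N) x = 0) (p : R[X]) :
    aeval L (trunc N (p : PowerSeries R)) x = aeval L p x := by
  obtain ⟨q, hq⟩ : X ^ N ∣ p - trunc N (p : PowerSeries R) :=
    X_pow_dvd_iff.mpr fun d hd => by simp [PowerSeries.coeff_trunc, hd]
  conv_rhs => rw [eq_add_of_sub_eq' hq]
  rw [mul_comm, map_add, map_mul, map_pow, aeval_X, LinearMap.add_apply, Module.End.mul_apply, hx,
    map_zero, add_zero]

theorem aeval_trunc_mul_apply_of_pow_apply_eq_zero (hx : (L ^ N) x = 0) (f g : PowerSeries R) :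
    aeval L (trunc N (f * g)) x = aeval L (trunc N f) (aeval L (trunc N g) x) := by
  rw [← PowerSeries.trunc_trunc_mul_trunc, ← Polynomial.coe_mul,
    aeval_trunc_coe_apply_of_pow_apply_eq_zero hx, map_mul, Module.End.mul_apply]

end TruncatedAction

theorem PowerSeries.coeff_rescale_div_two_exp {K : Type*} [Field K] [CharZero K] (c : K) (k : ℕ) :
    coeff k (rescale (c / 2) (exp K)) = c ^ k / (2 ^ k * k.factorial) := by
  rw [coeff_rescale, coeff_exp, div_pow, one_div, map_inv₀, map_natCast]
  field_simp

theorem aeval_sq_derivative_trunc_rescale_div_two_exp (N : ℕ) (c : ℝ) (p : ℝ[X]) :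
    aeval (derivative ^ 2) (trunc N (rescale (c / 2) (exp ℝ))) p =
      ∑ k ∈ range N, C (c ^ k / (2 ^ k * k.factorial)) * derivative^[2 * k] p := by
  simp only [aeval_trunc_apply, PowerSeries.coeff_rescale_div_two_exp, ← pow_mul,
    Module.End.pow_apply, smul_eq_C_mul]

theorem hermiteCigler_eq_aeval_trunc_exp (s : ℝ) (n : ℕ) :
    hermiteCigler s n =
      aeval (derivative ^ 2) (trunc (n / 2 + 1) (rescale (-s / 2) (exp ℝ))) (X ^ n) := by
  rw [aeval_sq_derivative_trunc_rescale_div_two_exp]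
  refine sum_congr rfl fun j hj => ?_
  have hjn : 2 * j ≤ n := by have := mem_range.mp hj; omega
  have hdesc : (n.descFactorial (2 * j) : ℝ) = n.factorial / (n - 2 * j).factorial := by
    rw [eq_div_iff (by positivity), mul_comm, ← Nat.cast_mul, Nat.factorial_mul_descFactorial hjn]
  rw [iterate_derivative_X_pow_eq_smul, smul_eq_C_mul, ← mul_assoc, ← C_mul, hdesc]
  congr 2
  rw [neg_pow s]
  field_simp

/-- Σ_{k=0}^{⌊n/2⌋} (s^k/(2k)!!) · D^{2k} H_n(x,s) = x^n. -/
theorem sum_iterate_deriv_hermiteCigler (s : ℝ) (n : ℕ) :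
    ∑ k ∈ Finset.range (n / 2 + 1),
      Polynomial.C (s ^ k / (2 ^ k * (Nat.factorial k : ℝ))) *
        (Polynomial.derivative (R := ℝ))^[2 * k] (hermiteCigler s n) =
      Polynomial.X ^ n := by
  have hX : ((derivative ^ 2) ^ (n / 2 + 1)) (X ^ n : ℝ[X]) = 0 := by
    rw [← pow_mul, Module.End.pow_apply]
    exact iterate_derivative_eq_zero (by rw [natDegree_X_pow]; omega)
  rw [← aeval_sq_derivative_trunc_rescale_div_two_exp, hermiteCigler_eq_aeval_trunc_exp,
    ← aeval_trunc_mul_apply_of_pow_apply_eq_zero hX, PowerSeries.exp_mul_exp_eq_exp_add, ← add_div,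
    add_neg_cancel, zero_div, PowerSeries.rescale_zero_apply, PowerSeries.constantCoeff_exp,
    map_one, PowerSeries.trunc_one, map_one, Module.End.one_apply]
end

section
/- Let 0 < q < 1 and x, s ∈ ℝ. In the ring of formal power series ℝ[[t]], the product (Σ_{k=0}^∞ x^k t^k/{k}_q!)·(Σ_{m=0}^∞ (-1)^m q^{m(m-1)} (s/{2}_q)^m t^{2m}/{m}_{q²}!) equals Σ_{n=0}^∞ (H_n(x,s|q)/{n}_q!)·t^n, where {m}_{q²}! denotes the q²-factorial Π_{l=1}^m (1-q^{2l})/(1-q²). -/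
/-- The q-number `{n}_q = 1 + q + ⋯ + q^{n-1}`. -/
noncomputable def qNum (q : ℝ) (n : ℕ) : ℝ := ∑ k ∈ Finset.range n, q ^ k

/-- The q-factorial `{n}_q! = Π_{k=1}^n {k}_q`. -/
noncomputable def qFact (q : ℝ) (n : ℕ) : ℝ := ∏ k ∈ Finset.range n, qNum q (k + 1)

/-- The even q-double factorial `{2k}_q!! = Π_{l=1}^k {2l}_q`. -/
noncomputable def qDoubleFact (q : ℝ) (k : ℕ) : ℝ := ∏ l ∈ Finset.range k, qNum q (2 * (l + 1))

/-- The q-Hermite number `H_n(x,s|q) = Σ_{k=0}^{⌊n/2⌋} (-1)^k q^{k(k-1)}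
({n}_q!/({n-2k}_q!·{2k}_q!!)) s^k x^{n-2k}`. -/
noncomputable def qHermiteFun (q s x : ℝ) (n : ℕ) : ℝ :=
  ∑ k ∈ Finset.range (n / 2 + 1),
    (-1 : ℝ) ^ k * q ^ (k * (k - 1)) *
      (qFact q n / (qFact q (n - 2 * k) * qDoubleFact q k)) * s ^ k * x ^ (n - 2 * k)

/-! The coefficient of `t^n` in the product is a Cauchy convolution in which only the even
indices `2k` of the second factor survive. Since `{2l}_q = {2}_q · {l}_{q²}`, the double
factorial factors as `{2k}_q!! = {2}_q^k · {k}_{q²}!`, and the `k`-th convolution term becomes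
the `k`-th summand of `H_n(x,s|q) / {n}_q!`. -/

open Finset PowerSeries

lemma qNum_succ_pos {q : ℝ} (hq : 0 ≤ q) (n : ℕ) : 0 < qNum q (n + 1) := by
  rw [qNum, sum_range_succ']
  positivity

lemma qFact_pos {q : ℝ} (hq : 0 ≤ q) (n : ℕ) : 0 < qFact q n :=
  prod_pos fun k _ => qNum_succ_pos hq k

lemma qNum_two_mul (q : ℝ) (j : ℕ) : qNum q (2 * j) = qNum q 2 * qNum (q ^ 2) j := by
  induction j with
  | zero => simp [qNum]
  | succ j ih =>
    rw [mul_add_one]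
    simp only [qNum, sum_range_succ] at ih ⊢
    rw [ih]
    ring

lemma qDoubleFact_eq_pow_mul_qFact_sq (q : ℝ) (k : ℕ) :
    qDoubleFact q k = qNum q 2 ^ k * qFact (q ^ 2) k := by
  simp only [qDoubleFact, qFact, qNum_two_mul, prod_mul_distrib, prod_const, card_range]

lemma sum_range_succ_ite_even {M : Type*} [AddCommMonoid M] (n : ℕ) (f : ℕ → M) :
    ∑ j ∈ range (n + 1), (if Even j then f j else 0) = ∑ k ∈ range (n / 2 + 1), f (2 * k) := by
  have hEven : (range (n + 1)).filter Even =
      (range (n / 2 + 1)).map ⟨(2 * ·), mul_right_injective₀ two_ne_zero⟩ := by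
    ext j
    simp only [mem_filter, mem_range, mem_map, Function.Embedding.coeFn_mk, even_iff_two_dvd]
    constructor
    · rintro ⟨hj, k, rfl⟩
      exact ⟨k, by omega, rfl⟩
    · rintro ⟨k, hk, rfl⟩
      exact ⟨by omega, dvd_mul_right 2 k⟩
  rw [← sum_filter, hEven, sum_map]
  rfl

lemma qHermiteFun_div_qFact {q : ℝ} (hq : 0 ≤ q) (s x : ℝ) (n : ℕ) :
    qHermiteFun q s x n / qFact q n = ∑ k ∈ range (n / 2 + 1),
      x ^ (n - 2 * k) / qFact q (n - 2 * k) *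
        ((-1 : ℝ) ^ k * q ^ (k * (k - 1)) * s ^ k / qDoubleFact q k) := by
  have hFn := (qFact_pos hq n).ne'
  rw [qHermiteFun, sum_div]
  refine sum_congr rfl fun k _ => ?_
  field_simp

theorem qHermite_generating_function_general (q : ℝ) (hq0 : 0 < q) (x s : ℝ) :
    (PowerSeries.mk fun k : ℕ => x ^ k / qFact q k) *
        (PowerSeries.mk fun j : ℕ =>
          if Even j then
            (-1 : ℝ) ^ (j / 2) * q ^ ((j / 2) * (j / 2 - 1)) * (s / qNum q 2) ^ (j / 2) /
              qFact (q ^ 2) (j / 2)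
          else 0) =
      PowerSeries.mk fun n : ℕ => qHermiteFun q s x n / qFact q n := by
  ext n
  rw [coeff_mul, ← Nat.sum_antidiagonal_swap, Nat.sum_antidiagonal_eq_sum_range_succ_mk]
  simp only [coeff_mk, Prod.swap_prod_mk, mul_ite, mul_zero]
  rw [sum_range_succ_ite_even, qHermiteFun_div_qFact hq0.le]
  refine sum_congr rfl fun k _ => ?_
  rw [Nat.mul_div_cancel_left k two_pos, qDoubleFact_eq_pow_mul_qFact_sq, div_pow]
  ring

/-- Generating function identity in `ℝ[[t]]`:
`(Σ_k x^k t^k/{k}_q!) · (Σ_m (-1)^m q^{m(m-1)} (s/{2}_q)^m t^{2m}/{m}_{q²}!)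
  = Σ_n (H_n(x,s|q)/{n}_q!) t^n`. -/
theorem qHermite_generating_function (q : ℝ) (hq0 : 0 < q) (hq1 : q < 1) (x s : ℝ) :
    (PowerSeries.mk fun k : ℕ => x ^ k / qFact q k) *
        (PowerSeries.mk fun j : ℕ =>
          if Even j then
            (-1 : ℝ) ^ (j / 2) * q ^ ((j / 2) * (j / 2 - 1)) * (s / qNum q 2) ^ (j / 2) /
              qFact (q ^ 2) (j / 2)
          else 0) =
      PowerSeries.mk fun n : ℕ => qHermiteFun q s x n / qFact q n :=
  qHermite_generating_function_general q hq0 x s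
end

section
/- Let 0 < q < 1 and let α, β be real numbers with α·β² ≠ 0. Then for every n ∈ ℕ, Σ_{k=0}^{n} q^{k(k-1)}·(αβ²)^k/{2k}_q!! = ((αβ²)^n·q^{n(n-1)}/{2n}_q!!)·Σ_{m=0}^{n} (q^{-2n};q²)_m·(-q²/((1-q)·αβ²))^m, where (a;Q)_m = Π_{j=0}^{m-1}(1 - a·Q^j) with (a;Q)_0 = 1. -/
/-- The q-Pochhammer symbol `(a;Q)_m = Π_{j=0}^{m-1} (1 - a Q^j)`. -/
noncomputable def qPoch (a Q : ℝ) (m : ℕ) : ℝ := ∏ j ∈ Finset.range m, (1 - a * Q ^ j)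

lemma qNum_pos {q : ℝ} (hq : 0 ≤ q) {n : ℕ} (hn : n ≠ 0) : 0 < qNum q n :=
  Finset.sum_pos' (fun i _ => pow_nonneg hq i)
    ⟨0, Finset.mem_range.mpr (Nat.pos_of_ne_zero hn), by simp⟩

lemma one_sub_pow_eq_mul_qNum (q : ℝ) (n : ℕ) : 1 - q ^ n = (1 - q) * qNum q n := by
  rw [qNum]
  linear_combination geom_sum_mul q n

lemma qDoubleFact_succ (q : ℝ) (k : ℕ) :
    qDoubleFact q (k + 1) = qDoubleFact q k * qNum q (2 * (k + 1)) :=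
  Finset.prod_range_succ _ _

lemma qPoch_succ (a Q : ℝ) (m : ℕ) : qPoch a Q (m + 1) = qPoch a Q m * (1 - a * Q ^ m) :=
  Finset.prod_range_succ _ _

noncomputable def qExpTerm (q c : ℝ) (k : ℕ) : ℝ := q ^ (k * (k - 1)) * c ^ k / qDoubleFact q k

lemma qExpTerm_succ (q c : ℝ) (k : ℕ) :
    qExpTerm q c (k + 1) = qExpTerm q c k * (q ^ (2 * k) * c / qNum q (2 * (k + 1))) := by
  have hexp : (k + 1) * (k + 1 - 1) = k * (k - 1) + 2 * k := by
    cases k with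
    | zero => rfl
    | succ k => simp only [Nat.add_sub_cancel]; ring
  rw [qExpTerm, qExpTerm, qDoubleFact_succ, hexp, pow_add, pow_succ]
  ring

lemma qExpTerm_succ_mul {q c : ℝ} (hq0 : 0 < q) (hq1 : q ≠ 1) (hc : c ≠ 0) (k : ℕ) :
    qExpTerm q c (k + 1) * ((1 - ((q ^ 2) ^ (k + 1))⁻¹) * (-q ^ 2 / ((1 - q) * c))) =
      qExpTerm q c k := by
  have h1q : 1 - q ≠ 0 := sub_ne_zero.mpr hq1.symm
  have hN := (qNum_pos hq0.le (n := 2 * (k + 1)) (by omega)).ne'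
  have hgeom : 1 - ((q ^ 2) ^ (k + 1))⁻¹ =
      -((q ^ 2) ^ (k + 1))⁻¹ * ((1 - q) * qNum q (2 * (k + 1))) := by
    rw [← one_sub_pow_eq_mul_qNum, pow_mul]
    field_simp
    ring
  rw [qExpTerm_succ, hgeom]
  field_simp
  ring

lemma qExpTerm_mul_qPoch {q c : ℝ} (hq0 : 0 < q) (hq1 : q ≠ 1) (hc : c ≠ 0) {m n : ℕ}
    (hm : m ≤ n) :
    qExpTerm q c n * (qPoch ((q ^ 2) ^ n)⁻¹ (q ^ 2) m * (-q ^ 2 / ((1 - q) * c)) ^ m) =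
      qExpTerm q c (n - m) := by
  induction m with
  | zero => simp [qPoch]
  | succ m ih =>
    obtain ⟨k, hk⟩ : ∃ k, n - m = k + 1 := ⟨n - m - 1, by omega⟩
    have hpow : ((q ^ 2) ^ n)⁻¹ * (q ^ 2) ^ m = ((q ^ 2) ^ (k + 1))⁻¹ := by
      rw [← hk, pow_sub₀ _ (by positivity) (by omega), mul_inv, inv_inv]
    calc qExpTerm q c n *
          (qPoch ((q ^ 2) ^ n)⁻¹ (q ^ 2) (m + 1) * (-q ^ 2 / ((1 - q) * c)) ^ (m + 1))
        = qExpTerm q c n * (qPoch ((q ^ 2) ^ n)⁻¹ (q ^ 2) m * (-q ^ 2 / ((1 - q) * c)) ^ m) *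
            ((1 - ((q ^ 2) ^ n)⁻¹ * (q ^ 2) ^ m) * (-q ^ 2 / ((1 - q) * c))) := by
          rw [qPoch_succ]; ring
      _ = qExpTerm q c (n - (m + 1)) := by
          rw [ih (by omega), hpow, hk, qExpTerm_succ_mul hq0 hq1 hc,
            show n - (m + 1) = k by omega]

/-- For `0 < q < 1` and `αβ² ≠ 0`,
`Σ_{k=0}^n q^{k(k-1)} (αβ²)^k/{2k}_q!! =
  ((αβ²)^n q^{n(n-1)}/{2n}_q!!) · Σ_{m=0}^n (q^{-2n};q²)_m (-q²/((1-q)αβ²))^m`. -/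
theorem qL_sum_eq (q : ℝ) (hq0 : 0 < q) (hq1 : q < 1) (α β : ℝ) (h : α * β ^ 2 ≠ 0) (n : ℕ) :
    ∑ k ∈ Finset.range (n + 1), q ^ (k * (k - 1)) * (α * β ^ 2) ^ k / qDoubleFact q k =
      (α * β ^ 2) ^ n * q ^ (n * (n - 1)) / qDoubleFact q n *
        ∑ m ∈ Finset.range (n + 1),
          qPoch (q ^ (-(2 * (n : ℤ)))) (q ^ 2) m * (-q ^ 2 / ((1 - q) * (α * β ^ 2))) ^ m := by
  have hbase : q ^ (-(2 * (n : ℤ))) = ((q ^ 2) ^ n)⁻¹ := by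
    rw [zpow_neg, ← pow_mul]; norm_cast
  have hterm : ∀ k, q ^ (k * (k - 1)) * (α * β ^ 2) ^ k / qDoubleFact q k =
      qExpTerm q (α * β ^ 2) k := fun k => rfl
  have hlead : (α * β ^ 2) ^ n * q ^ (n * (n - 1)) / qDoubleFact q n =
      qExpTerm q (α * β ^ 2) n := by rw [qExpTerm, mul_comm ((α * β ^ 2) ^ n)]
  simp only [hterm, hlead, hbase, Finset.mul_sum]
  rw [← Finset.sum_range_reflect]
  refine Finset.sum_congr rfl fun m hm => ?_
  rw [qExpTerm_mul_qPoch hq0 hq1.ne h (Finset.mem_range_succ_iff.mp hm), Nat.add_sub_cancel]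
end

section
/- Let q be a real number with q > 0 and q ≠ 1, and for natural numbers n, k with 2k ≤ n define c_{n,k}(q) = (-1)^k q^{k(k-1)}·{n}_q!/({n-2k}_q!·{2k}_q!!). Then c_{n,k}(1/q) = q^{k(k+3-2n)}·c_{n,k}(q), where c_{n,k}(1/q) is the same expression with q replaced by 1/q and q^{k(k+3-2n)} denotes the integer power of q. -/
/-!
Reading `1 + q + ⋯ + q^{n-1}` backwards gives `{n}_{1/q} = q^{1-n} {n}_q`. Multiplying these,
`{n}_{1/q}! = q^{-C(n,2)} {n}_q!` and `{2k}_{1/q}!! = q^{-k²} {2k}_q!!`, so `c_{n,k}(1/q)` is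
`c_{n,k}(q)` times a power of `q`; its exponent is `k(k+3-2n)` because
`C(n,2) - C(n-2k,2) = k(2n-2k-1)`.
-/

open Finset

/-- The coefficient `c_{n,k}(q) = (-1)^k q^{k(k-1)} {n}_q!/({n-2k}_q!·{2k}_q!!)`. -/
noncomputable def qHermiteCoeff (q : ℝ) (n k : ℕ) : ℝ :=
  (-1 : ℝ) ^ k * q ^ (k * (k - 1)) * qFact q n / (qFact q (n - 2 * k) * qDoubleFact q k)

lemma qNum_inv {q : ℝ} (hq : q ≠ 0) (n : ℕ) : qNum q⁻¹ n = (q ^ (n - 1))⁻¹ * qNum q n := by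
  rw [qNum, qNum, mul_sum, ← sum_range_reflect]
  refine sum_congr rfl fun j hj => ?_
  rw [inv_pow, ← pow_sub_mul_pow q (show j ≤ n - 1 by grind), mul_inv, mul_assoc,
    inv_mul_cancel₀ (pow_ne_zero j hq), mul_one]

lemma qFact_inv {q : ℝ} (hq : q ≠ 0) (n : ℕ) :
    qFact q⁻¹ n = (q ^ n.choose 2)⁻¹ * qFact q n := by
  induction n with
  | zero => simp [qFact]
  | succ n ih =>
    rw [qFact, qFact, prod_range_succ, prod_range_succ, ← qFact, ← qFact, ih, qNum_inv hq,
      Nat.choose_succ_succ', Nat.choose_one_right, Nat.add_sub_cancel, pow_add, mul_inv]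
    ring

lemma qDoubleFact_inv {q : ℝ} (hq : q ≠ 0) (k : ℕ) :
    qDoubleFact q⁻¹ k = (q ^ k ^ 2)⁻¹ * qDoubleFact q k := by
  induction k with
  | zero => simp [qDoubleFact]
  | succ k ih =>
    rw [qDoubleFact, qDoubleFact, prod_range_succ, prod_range_succ, ← qDoubleFact,
      ← qDoubleFact, ih, qNum_inv hq, show (k + 1) ^ 2 = k ^ 2 + (2 * (k + 1) - 1) by grind,
      pow_add, mul_inv]
    ring

lemma qHermiteCoeff_inv_exponent (m k : ℕ) :
    -((k * (k - 1) : ℕ) : ℤ) + -((m + 2 * k).choose 2 : ℕ) =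
      k * (k + 3 - 2 * (m + 2 * k : ℕ)) + (k * (k - 1) : ℕ) +
        (-(m.choose 2 : ℕ) + -(k ^ 2 : ℕ)) := by
  have hk : (k : ℚ) * (k - 1 : ℕ) = k * (k - 1) := by
    rcases k with _ | k <;> simp
  qify
  push_cast [hk, Nat.cast_choose_two]
  ring

theorem qHermiteCoeff_inv_general (q : ℝ) (hq0 : 0 < q) (n k : ℕ) (hk : 2 * k ≤ n) :
    qHermiteCoeff (1 / q) n k =
      q ^ ((k : ℤ) * ((k : ℤ) + 3 - 2 * (n : ℤ))) * qHermiteCoeff q n k := by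
  obtain ⟨m, rfl⟩ : ∃ m, n = m + 2 * k := ⟨n - 2 * k, by omega⟩
  have hq := hq0.ne'
  set P := (q ^ m.choose 2)⁻¹ * (q ^ k ^ 2)⁻¹
  have hpow : (q ^ (k * (k - 1)))⁻¹ * (q ^ (m + 2 * k).choose 2)⁻¹ =
      q ^ ((k : ℤ) * (k + 3 - 2 * (m + 2 * k : ℕ))) * q ^ (k * (k - 1)) * P := by
    simp only [P, ← zpow_natCast, ← zpow_neg, ← zpow_add₀ hq, qHermiteCoeff_inv_exponent]
  calc qHermiteCoeff (1 / q) (m + 2 * k) k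
      = (q ^ (k * (k - 1)))⁻¹ * (q ^ (m + 2 * k).choose 2)⁻¹ * ((-1) ^ k * qFact q (m + 2 * k)) /
          (P * (qFact q m * qDoubleFact q k)) := by
        simp only [qHermiteCoeff, one_div, inv_pow, Nat.add_sub_cancel, qFact_inv hq,
          qDoubleFact_inv hq]
        ring
    _ = P * (q ^ ((k : ℤ) * (k + 3 - 2 * (m + 2 * k : ℕ))) *
          ((-1) ^ k * q ^ (k * (k - 1)) * qFact q (m + 2 * k))) /
          (P * (qFact q m * qDoubleFact q k)) := by
        rw [hpow]; ring
    _ = q ^ ((k : ℤ) * (k + 3 - 2 * (m + 2 * k : ℕ))) * qHermiteCoeff q (m + 2 * k) k := by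
        rw [mul_div_mul_left _ _ (by positivity), mul_div_assoc, qHermiteCoeff, Nat.add_sub_cancel]

/-- `c_{n,k}(q^{-1}) = q^{k(k+3-2n)} c_{n,k}(q)`. -/
theorem qHermiteCoeff_inv (q : ℝ) (hq0 : 0 < q) (hq1 : q ≠ 1) (n k : ℕ) (hk : 2 * k ≤ n) :
    qHermiteCoeff (1 / q) n k =
      q ^ ((k : ℤ) * ((k : ℤ) + 3 - 2 * (n : ℤ))) * qHermiteCoeff q n k :=
  qHermiteCoeff_inv_general q hq0 n k hk
end
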